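/- arXiv:2410.16793 — 2 statements merged into one kernel-verified Lean document; each statement's English description precedes it below -/
import Mathlib

section
/- For every nonzero d in R^3, det G(d) = 2·(3a/(4|d|))^3, i.e., the determinant of G(d) equals 27a^3/(32|d|^3); in particular G(d) is invertible. -/
noncomputable def Gmat (a : ℝ) (d : EuclideanSpace ℝ (Fin 3)) : Matrix (Fin 3) (Fin 3) ℝ :=
  (3 * a / 4) • (‖d‖⁻¹ • (1 : Matrix (Fin 3) (Fin 3) ℝ)
    + (‖d‖ ^ 3)⁻¹ • Matrix.vecMulVec (fun i => d i) (fun i => d i))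

/-!
With `u = d / ‖d‖` a unit vector, `G(d) = (3a / (4‖d‖)) (I + u uᵀ)`, and by the matrix
determinant lemma `det (I + u uᵀ) = 1 + u ⬝ u = 2`.
-/

open Matrix

theorem Matrix.det_one_add_vecMulVec {m R : Type*} [Fintype m] [DecidableEq m] [CommRing R]
    (u v : m → R) : (1 + vecMulVec u v).det = 1 + v ⬝ᵥ u := by
  rw [vecMulVec_eq Unit, det_one_add_replicateCol_mul_replicateRow]

theorem EuclideanSpace.ofLp_dotProduct_self {ι : Type*} [Fintype ι] (x : EuclideanSpace ℝ ι) :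
    x.ofLp ⬝ᵥ x.ofLp = ‖x‖ ^ 2 := by
  rw [← real_inner_self_eq_norm_sq, EuclideanSpace.inner_eq_star_dotProduct, star_trivial]

theorem Gmat_eq_smul_one_add_vecMulVec (a : ℝ) (d : EuclideanSpace ℝ (Fin 3)) :
    Gmat a d = (3 * a / (4 * ‖d‖)) • (1 + vecMulVec (‖d‖⁻¹ • d.ofLp) (‖d‖⁻¹ • d.ofLp)) := by
  rw [Gmat, smul_vecMulVec, vecMulVec_smul]
  module

theorem det_Gmat (a : ℝ) {d : EuclideanSpace ℝ (Fin 3)} (hd : d ≠ 0) :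
    (Gmat a d).det = 2 * (3 * a / (4 * ‖d‖)) ^ 3 := by
  have hunit : (‖d‖⁻¹ • d.ofLp) ⬝ᵥ (‖d‖⁻¹ • d.ofLp) = 1 := by
    rw [smul_dotProduct, dotProduct_smul, EuclideanSpace.ofLp_dotProduct_self, smul_eq_mul,
      smul_eq_mul]
    field_simp [norm_ne_zero_iff.mpr hd]
  rw [Gmat_eq_smul_one_add_vecMulVec, det_smul, det_one_add_vecMulVec, hunit, Fintype.card_fin]
  ring

theorem stmt_3 (a : ℝ) (ha : 0 < a) (d : EuclideanSpace ℝ (Fin 3)) (hd : d ≠ 0) :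
    (Gmat a d).det = 27 * a ^ 3 / (32 * ‖d‖ ^ 3) ∧ IsUnit (Gmat a d) := by
  have hdet : (Gmat a d).det = 27 * a ^ 3 / (32 * ‖d‖ ^ 3) := by
    rw [det_Gmat a hd]
    ring
  refine ⟨hdet, ?_⟩
  have : 0 < ‖d‖ := norm_pos_iff.mpr hd
  rw [isUnit_iff_isUnit_det, hdet, isUnit_iff_ne_zero]
  positivity
end

section
/- The set S_R^n of well-separated configurations of n points in R^3 is path-connected (hence connected). -/
/-!
Sort the points by their projection on a unit vector `e` and let `r` be the resulting rank.
Pushing every point `z α` in the direction `e` by `c * r α` only increases mutual distances,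
since the push is monotone along `e`; then shrinking the original configuration to zero leaves
the collinear configuration `α ↦ (c * r α) • e`, again without decreasing any distance.
Configurations whose projections on a fixed unit vector are spread out by more than `R` in a
fixed order form a convex set of separated configurations. Two such convex sets (ordered by `r`
along `e`, and by a reference rank `r₀` along an orthogonal `f`) connect `α ↦ (c * r α) • e`
to the base point `α ↦ (c * r₀ α) • f` through `α ↦ (c * r α) • e + (c * r₀ α) • f`.
-/

open scoped RealInnerProductSpace

variable {ι E : Type*} [NormedAddCommGroup E] [InnerProductSpace ℝ E]

theorem norm_le_norm_add_smul_of_inner_nonneg {a b : E} (h : 0 ≤ ⟪a, b⟫) {t : ℝ}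
    (ht : 0 ≤ t) : ‖a‖ ≤ ‖a + t • b‖ := by
  have hsq : ‖a‖ ^ 2 ≤ ‖a + t • b‖ ^ 2 := by
    rw [norm_add_sq_real, inner_smul_right]
    nlinarith [mul_nonneg ht h, sq_nonneg ‖t • b‖]
  exact le_of_sq_le_sq (by simpa using hsq) (norm_nonneg _)

theorem exists_injective_rank {α : Type*} [LinearOrder α] [Finite ι] (g : ι → α) :
    ∃ r : ι → ℕ, Function.Injective r ∧ ∀ i j, r i ≤ r j → g i ≤ g j := by
  obtain ⟨n, ⟨eqv⟩⟩ := Finite.exists_equiv_fin ι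
  set σ := Tuple.sort (g ∘ eqv.symm)
  refine ⟨fun i => σ⁻¹ (eqv i), fun i j h => by simpa using Fin.val_injective h,
    fun i j h => ?_⟩
  simpa [σ, Equiv.Perm.inv_def] using
    Tuple.monotone_sort (g ∘ eqv.symm) (show σ⁻¹ (eqv i) ≤ σ⁻¹ (eqv j) from h)

variable (ι E) in
def separatedConfigs (R : ℝ) : Set (ι → E) :=
  {z | ∀ α β, α ≠ β → R < ‖z α - z β‖}

def separatedAlong (R : ℝ) (r : ι → ℕ) (u : E) : Set (ι → E) :=
  {z | ∀ α β, r α < r β → R < ⟪z β - z α, u⟫}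

theorem convex_separatedAlong (R : ℝ) (r : ι → ℕ) (u : E) :
    Convex ℝ (separatedAlong R r u) := by
  have : separatedAlong R r u = ⋂ α, ⋂ β, ⋂ (_ : r α < r β), {z | R < ⟪z β - z α, u⟫} := by
    ext z; simp [separatedAlong]
  rw [this]
  refine convex_iInter fun α => convex_iInter fun β => convex_iInter fun _ =>
    convex_halfSpace_gt ⟨fun x y => ?_, fun c x => ?_⟩ R
  · simp only [Pi.add_apply, add_sub_add_comm, inner_add_left]
  · simp only [Pi.smul_apply, ← smul_sub, inner_smul_left, RCLike.conj_to_real, smul_eq_mul]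

theorem separatedAlong_subset {R : ℝ} {r : ι → ℕ} (hr : Function.Injective r) {u : E}
    (hu : ‖u‖ = 1) : separatedAlong R r u ⊆ separatedConfigs ι E R := by
  intro z hz α β hne
  have hlt (α β : ι) (h : r α < r β) : R < ‖z β - z α‖ := by
    simpa [hu] using (hz α β h).trans_le (real_inner_le_norm _ _)
  rcases lt_or_gt_of_ne (hr.ne hne) with h | h
  · rw [norm_sub_rev]; exact hlt α β h
  · exact hlt β α h

theorem add_rank_smul_mem_separatedAlong {R c : ℝ} (hc₀ : 0 ≤ c) (hc : R < c) (r : ι → ℕ)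
    {u : E} (hu : ‖u‖ = 1) {z : ι → E} (hz : ∀ α, ⟪z α, u⟫ = 0) :
    (fun α => z α + (c * r α) • u) ∈ separatedAlong R r u := by
  intro α β h
  have hgap : (r α : ℝ) + 1 ≤ r β := mod_cast h
  simp only [add_sub_add_comm, ← sub_smul, inner_add_left, inner_sub_left, hz, inner_smul_left,
    real_inner_self_eq_norm_sq, hu, RCLike.conj_to_real]
  nlinarith

theorem rank_smul_mem_separatedAlong {R c : ℝ} (hc₀ : 0 ≤ c) (hc : R < c) (r : ι → ℕ) {u : E}
    (hu : ‖u‖ = 1) : (fun α => (c * r α) • u) ∈ separatedAlong R r u := by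
  simpa using add_rank_smul_mem_separatedAlong hc₀ hc r hu (z := 0) (by simp)

theorem joinedIn_of_mem_separatedAlong {R : ℝ} {r : ι → ℕ} (hr : Function.Injective r) {u : E}
    (hu : ‖u‖ = 1) {x y : ι → E} (hx : x ∈ separatedAlong R r u)
    (hy : y ∈ separatedAlong R r u) : JoinedIn (separatedConfigs ι E R) x y :=
  (((convex_separatedAlong R r u).isPathConnected ⟨x, hx⟩).joinedIn x hx y hy).mono
    (separatedAlong_subset hr hu)

theorem joinedIn_add_of_inner_nonneg {R : ℝ} {x y : ι → E} (hx : x ∈ separatedConfigs ι E R)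
    (h : ∀ α β, 0 ≤ ⟪x α - x β, y α - y β⟫) :
    JoinedIn (separatedConfigs ι E R) x (x + y) := by
  refine JoinedIn.of_segment_subset ?_
  rw [segment_eq_image']
  rintro _ ⟨t, ⟨ht, -⟩, rfl⟩ α β hne
  calc R < ‖x α - x β‖ := hx α β hne
    _ ≤ ‖x α - x β + t • (y α - y β)‖ := norm_le_norm_add_smul_of_inner_nonneg (h α β) ht
    _ = _ := by
      rw [add_sub_cancel_left]
      simp only [Pi.add_apply, Pi.smul_apply, smul_sub]
      congr 1; abel

theorem joinedIn_rank_smul {R c : ℝ} (hc₀ : 0 ≤ c) (hc : R < c) {e : E} (he : ‖e‖ = 1)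
    {z : ι → E} (hz : z ∈ separatedConfigs ι E R) {r : ι → ℕ} (hr : Function.Injective r)
    (hzr : ∀ α β, r α ≤ r β → ⟪z α, e⟫ ≤ ⟪z β, e⟫) :
    JoinedIn (separatedConfigs ι E R) z (fun α => (c * r α) • e) := by
  set v : ι → E := fun α => (c * r α) • e
  have hv : v ∈ separatedConfigs ι E R :=
    separatedAlong_subset hr he (rank_smul_mem_separatedAlong hc₀ hc r he)
  have hzv (α β : ι) : 0 ≤ ⟪z α - z β, v α - v β⟫ := by
    simp only [v, ← sub_smul, inner_smul_right, inner_sub_left, ← mul_sub]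
    rcases le_total (r α) (r β) with h | h
    · have hr' : (r α : ℝ) ≤ r β := mod_cast h
      exact mul_nonneg_of_nonpos_of_nonpos
        (mul_nonpos_of_nonneg_of_nonpos hc₀ (sub_nonpos.2 hr')) (sub_nonpos.2 (hzr α β h))
    · have hr' : (r β : ℝ) ≤ r α := mod_cast h
      exact mul_nonneg (mul_nonneg hc₀ (sub_nonneg.2 hr')) (sub_nonneg.2 (hzr β α h))
  have hvz := joinedIn_add_of_inner_nonneg hv fun α β => by rw [real_inner_comm]; exact hzv α β
  rw [add_comm] at hvz
  exact (joinedIn_add_of_inner_nonneg hz hzv).trans hvz.symm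

theorem isPathConnected_separatedConfigs [Finite ι] (R : ℝ) {e f : E} (he : ‖e‖ = 1)
    (hf : ‖f‖ = 1) (hef : ⟪e, f⟫ = 0) : IsPathConnected (separatedConfigs ι E R) := by
  obtain ⟨r₀, hr₀⟩ := exists_injective_nat ι
  set c := |R| + 1
  have hc₀ : 0 ≤ c := by positivity
  have hc : R < c := by linarith [le_abs_self R]
  have hbase := rank_smul_mem_separatedAlong hc₀ hc r₀ hf
  refine ⟨_, separatedAlong_subset hr₀ hf hbase, fun {z} hz => ?_⟩
  obtain ⟨r, hr, hzr⟩ := exists_injective_rank fun α => ⟪z α, e⟫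
  set w : ι → E := fun α => (c * r α) • e + (c * r₀ α) • f
  have hwe : w ∈ separatedAlong R r e := by
    simpa [w, add_comm] using add_rank_smul_mem_separatedAlong hc₀ hc r he
      (z := fun α => (c * r₀ α) • f) fun α => by simp [inner_smul_left, real_inner_comm, hef]
  have hwf : w ∈ separatedAlong R r₀ f :=
    add_rank_smul_mem_separatedAlong hc₀ hc r₀ hf (z := fun α => (c * r α) • e) fun α => by
      simp [inner_smul_left, hef]
  exact ((joinedIn_rank_smul hc₀ hc he hz hr hzr).trans
    ((joinedIn_of_mem_separatedAlong hr he (rank_smul_mem_separatedAlong hc₀ hc r he) hwe).trans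
      (joinedIn_of_mem_separatedAlong hr₀ hf hwf hbase))).symm

theorem stmt_10_general (R : ℝ) (n : ℕ) :
    IsPathConnected {z : Fin n → EuclideanSpace ℝ (Fin 3) |
      ∀ α β : Fin n, α ≠ β → ‖z α - z β‖ > R} ∧
    IsConnected {z : Fin n → EuclideanSpace ℝ (Fin 3) |
      ∀ α β : Fin n, α ≠ β → ‖z α - z β‖ > R} := by
  have h : IsPathConnected (separatedConfigs (Fin n) (EuclideanSpace ℝ (Fin 3)) R) :=
    isPathConnected_separatedConfigs R (e := EuclideanSpace.single 0 1)
      (f := EuclideanSpace.single 1 1) (by simp) (by simp)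
      (by simp [EuclideanSpace.inner_single_left])
  exact ⟨h, h.isConnected⟩

theorem stmt_10 (R : ℝ) (hR : 0 < R) (n : ℕ) (hn : 2 ≤ n) :
    IsPathConnected {z : Fin n → EuclideanSpace ℝ (Fin 3) |
      ∀ α β : Fin n, α ≠ β → ‖z α - z β‖ > R} ∧
    IsConnected {z : Fin n → EuclideanSpace ℝ (Fin 3) |
      ∀ α β : Fin n, α ≠ β → ‖z α - z β‖ > R} :=
  stmt_10_general R n
end
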